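/- arXiv:2007.12815 — 5 statements merged into one kernel-verified Lean document; each statement's English description precedes it below -/
import Mathlib

section
/- Let n1, n2 be positive integers, W an n1 × n2 real matrix, b¹ ∈ ℝ^{n1}, b² ∈ ℝ^{n2}, and let the Restricted Boltzmann Machine (RBM) distribution on pairs (x,h) ∈ {±1}^{n1} × {±1}^{n2} be defined by Pr(X = x, H = h) = exp(⟨x, W h⟩ + ⟨b¹, x⟩ + ⟨b², h⟩)/Z, where Z is the normalizing constant. Then for every visible index i ∈ [n1] and every assignment x ∈ {±1}^{n1} of the visible units, the conditional expectation of X_i given X_k = x_k for all k ≠ i equals tanh( b¹_i + Σ_{j=1}^{n2} arctanh( tanh(W_{ij}) · tanh( b²_j + Σ_{k ≠ i} W_{kj} x_k ) ) ). -/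
open Finset Real

/-- `arctanh x = (1/2) log((1+x)/(1-x))`, the inverse hyperbolic tangent. -/
noncomputable def arctanh (x : ℝ) : ℝ := (1 / 2) * Real.log ((1 + x) / (1 - x))

/-- Map a boolean spin to `±1`. -/
def spin (b : Bool) : ℝ := if b then 1 else -1

/-- Energy (negative) of a configuration of the RBM:
`⟨x, W h⟩ + ⟨b¹, x⟩ + ⟨b², h⟩`. -/
def rbmWeight {n1 n2 : ℕ} (W : Fin n1 → Fin n2 → ℝ) (b1 : Fin n1 → ℝ)
    (b2 : Fin n2 → ℝ) (x : Fin n1 → ℝ) (h : Fin n2 → ℝ) : ℝ :=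
  (∑ i, ∑ j, x i * W i j * h j) + (∑ i, b1 i * x i) + (∑ j, b2 j * h j)

/-!
Summing out the hidden layer factorises the visible marginal: with `u_j` the field on hidden
unit `j` from the visible units other than `i`, the weight of `X_i = v` is proportional to
`exp (v b¹_i) ∏_j 2 cosh (u_j + v W_ij)`. The conditional expectation is therefore
`(A - B) / (A + B) = tanh y` with
`exp (2y) = A / B = exp (2 b¹_i) ∏_j cosh (u_j + W_ij) / cosh (u_j - W_ij)`,
and each factor equals `exp (2 arctanh (tanh W_ij tanh u_j))` by the addition formulas for `cosh`.
-/

theorem one_add_tanh_mul_tanh (w u : ℝ) :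
    1 + tanh w * tanh u = cosh (u + w) / (cosh w * cosh u) := by
  have := cosh_pos w; have := cosh_pos u
  rw [cosh_add, tanh_eq_sinh_div_cosh, tanh_eq_sinh_div_cosh]
  field_simp

theorem one_sub_tanh_mul_tanh (w u : ℝ) :
    1 - tanh w * tanh u = cosh (u - w) / (cosh w * cosh u) := by
  have := cosh_pos w; have := cosh_pos u
  rw [cosh_sub, tanh_eq_sinh_div_cosh, tanh_eq_sinh_div_cosh]
  field_simp

theorem exp_two_mul_arctanh_tanh_mul_tanh (w u : ℝ) :
    exp (2 * arctanh (tanh w * tanh u)) = cosh (u + w) / cosh (u - w) := by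
  have hratio : (1 + tanh w * tanh u) / (1 - tanh w * tanh u) = cosh (u + w) / cosh (u - w) := by
    rw [one_add_tanh_mul_tanh, one_sub_tanh_mul_tanh,
      div_div_div_cancel_right₀ (by positivity)]
  rw [arctanh, ← mul_assoc, mul_one_div_cancel two_ne_zero, one_mul, hratio,
    exp_log (by positivity)]

theorem tanh_eq_sub_div_add {y A B : ℝ} (hB : 0 < B) (h : exp (2 * y) = A / B) :
    tanh y = (A - B) / (A + B) := by
  have hA : A = exp y ^ 2 * B := by
    rw [← exp_nat_mul, Nat.cast_ofNat, h, div_mul_cancel₀ _ hB.ne']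
  rw [tanh_eq, hA, exp_neg]
  have := exp_pos y
  field_simp

theorem sum_mul_update_eq_add_sum_erase {ι : Type*} [Fintype ι] [DecidableEq ι]
    (c x : ι → ℝ) (i : ι) (v : ℝ) :
    ∑ k, c k * Function.update x i v k = c i * v + ∑ k ∈ univ.erase i, c k * x k := by
  rw [← add_sum_erase _ _ (mem_univ i), Function.update_self]
  congr 1
  exact sum_congr rfl fun k hk => by rw [Function.update_of_ne (ne_of_mem_erase hk)]

@[simp] theorem spin_true : spin true = 1 := rfl

@[simp] theorem spin_false : spin false = -1 := rfl

theorem sum_prod_exp_spin_mul {ι : Type*} [Fintype ι] [DecidableEq ι] (a : ι → ℝ) :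
    ∑ ε : ι → Bool, ∏ j, exp (spin (ε j) * a j) = ∏ j, 2 * cosh (a j) := by
  rw [← Fintype.prod_sum fun j (b : Bool) => exp (spin b * a j)]
  refine prod_congr rfl fun j _ => ?_
  rw [Fintype.sum_bool, spin_true, spin_false, one_mul, neg_one_mul, cosh_eq]
  ring

theorem rbmWeight_eq_add_sum_mul {n1 n2 : ℕ} (W : Fin n1 → Fin n2 → ℝ) (b1 : Fin n1 → ℝ)
    (b2 : Fin n2 → ℝ) (x : Fin n1 → ℝ) (h : Fin n2 → ℝ) :
    rbmWeight W b1 b2 x h = ∑ i, b1 i * x i + ∑ j, h j * (b2 j + ∑ i, W i j * x i) := by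
  simp only [rbmWeight, mul_add, sum_add_distrib, mul_sum]
  rw [sum_comm (s := univ) (t := univ)]
  simp only [mul_comm, mul_left_comm]
  ring

theorem sum_exp_rbmWeight {n1 n2 : ℕ} (W : Fin n1 → Fin n2 → ℝ) (b1 : Fin n1 → ℝ)
    (b2 : Fin n2 → ℝ) (x : Fin n1 → ℝ) :
    ∑ ε : Fin n2 → Bool, exp (rbmWeight W b1 b2 x fun j => spin (ε j)) =
      exp (∑ i, b1 i * x i) * ∏ j, 2 * cosh (b2 j + ∑ i, W i j * x i) := by
  simp only [rbmWeight_eq_add_sum_mul, exp_add, exp_sum, ← mul_sum]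
  rw [sum_prod_exp_spin_mul]

theorem sum_exp_rbmWeight_update {n1 n2 : ℕ} (W : Fin n1 → Fin n2 → ℝ) (b1 : Fin n1 → ℝ)
    (b2 : Fin n2 → ℝ) (x : Fin n1 → ℝ) (i : Fin n1) (v : ℝ) :
    ∑ ε : Fin n2 → Bool, exp (rbmWeight W b1 b2 (Function.update x i v) fun j => spin (ε j)) =
      exp (∑ k ∈ univ.erase i, b1 k * x k) * (exp (b1 i * v) *
        ∏ j, 2 * cosh ((b2 j + ∑ k ∈ univ.erase i, W k j * x k) + W i j * v)) := by
  simp only [sum_exp_rbmWeight, sum_mul_update_eq_add_sum_erase, exp_add]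
  rw [mul_comm (exp (b1 i * v)), mul_assoc]
  exact congrArg _ (congrArg _ (prod_congr rfl fun j _ => by congr 2; ring))

theorem tanh_add_sum_arctanh {ι : Type*} [Fintype ι] (b : ℝ) (w u : ι → ℝ) :
    tanh (b + ∑ j, arctanh (tanh (w j) * tanh (u j))) =
      (exp b * ∏ j, 2 * cosh (u j + w j) - exp (-b) * ∏ j, 2 * cosh (u j - w j)) /
        (exp b * ∏ j, 2 * cosh (u j + w j) + exp (-b) * ∏ j, 2 * cosh (u j - w j)) := by
  refine tanh_eq_sub_div_add (by positivity) ?_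
  rw [mul_add, exp_add, mul_sum, exp_sum]
  simp only [exp_two_mul_arctanh_tanh_mul_tanh, prod_div_distrib, prod_mul_distrib]
  field_simp
  rw [← exp_add]
  ring_nf

theorem rbm_node_prediction_general {n1 n2 : ℕ}
    (W : Fin n1 → Fin n2 → ℝ) (b1 : Fin n1 → ℝ) (b2 : Fin n2 → ℝ)
    (i : Fin n1) (x : Fin n1 → ℝ) :
    (∑ s : Bool, ∑ ε : Fin n2 → Bool,
        spin s *
          Real.exp (rbmWeight W b1 b2 (Function.update x i (spin s)) (fun j => spin (ε j)))) /
      (∑ s : Bool, ∑ ε : Fin n2 → Bool,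
        Real.exp (rbmWeight W b1 b2 (Function.update x i (spin s)) (fun j => spin (ε j)))) =
    Real.tanh (b1 i + ∑ j,
      arctanh (Real.tanh (W i j) *
        Real.tanh (b2 j + ∑ k ∈ Finset.univ.erase i, W k j * x k))) := by
  simp only [Fintype.sum_bool, spin_true, spin_false, one_mul, neg_one_mul, sum_neg_distrib,
    sum_exp_rbmWeight_update, mul_one, mul_neg, ← sub_eq_add_neg]
  rw [← mul_sub, ← mul_add, mul_div_mul_left _ _ (exp_ne_zero _), tanh_add_sum_arctanh]

/-- **Theorem (RBM node prediction).** For any visible unit `i` of an arbitrary RBM and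
any assignment `x` of the visible spins, the conditional expectation of `X i` given
`X k = x k` for `k ≠ i` equals
`tanh (b¹ i + ∑ j, arctanh (tanh (W i j) * tanh (b² j + ∑_{k ≠ i} W k j * x k)))`. -/
theorem rbm_node_prediction {n1 n2 : ℕ} (hn1 : 0 < n1) (hn2 : 0 < n2)
    (W : Fin n1 → Fin n2 → ℝ) (b1 : Fin n1 → ℝ) (b2 : Fin n2 → ℝ)
    (i : Fin n1) (x : Fin n1 → ℝ) (hx : ∀ k, x k = 1 ∨ x k = -1) :
    (∑ s : Bool, ∑ ε : Fin n2 → Bool,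
        spin s *
          Real.exp (rbmWeight W b1 b2 (Function.update x i (spin s)) (fun j => spin (ε j)))) /
      (∑ s : Bool, ∑ ε : Fin n2 → Bool,
        Real.exp (rbmWeight W b1 b2 (Function.update x i (spin s)) (fun j => spin (ε j)))) =
    Real.tanh (b1 i + ∑ j,
      arctanh (Real.tanh (W i j) *
        Real.tanh (b2 j + ∑ k ∈ Finset.univ.erase i, W k j * x k))) :=
  rbm_node_prediction_general W b1 b2 i x
end

section
/- Let T, n be positive integers, u₀, u₁, …, u_T real numbers, and M a T × (n+1) real matrix. For β ∈ (0,1] define f_β(t) := (1/β) arctanh(β tanh(t)) and f₀ := tanh. Then for every x ∈ ℝⁿ, the limit as K → ∞ (over positive integers K) of tanh( u₀ + Σ_{i=1}^{K} Σ_{j=1}^{T} tanh(u_j/K) · f_{|u_j|/K}( M_{j0} + Σ_{k=1}^{n} M_{jk} x_k ) ) exists and equals tanh( u₀ + Σ_{j=1}^{T} u_j · tanh( M_{j0} + Σ_{k=1}^{n} M_{jk} x_k ) ). (For indices j with u_j = 0 the corresponding summand is 0, consistent with tanh(0) = 0.) -/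
open Finset Real Filter

/-- The family of activations `f_β(t) = (1/β) arctanh (β tanh t)` for `β ∈ (0,1]`,
with `f_0 = tanh`. -/
noncomputable def fAct (β : ℝ) (t : ℝ) : ℝ :=
  if β = 0 then Real.tanh t else (1 / β) * arctanh (β * Real.tanh t)

/-!
Duplicating a hidden unit `K` times turns the inner sum into `K` copies of one term, so the
argument of the outer `tanh` is `∑ⱼ (K · tanh (uⱼ / K)) · f_{|uⱼ|/K}(zⱼ)`. Since `tanh` vanishes
at `0` with slope `1`, `K · tanh (u / K) → u`; since `arctanh` does too, `f_β t` is a difference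
quotient of `β ↦ arctanh (β tanh t)` at `0`, so `f_β t → tanh t` as `β → 0`, i.e. `β ↦ f_β t`
is continuous at `0`. Continuity of `tanh` concludes.
-/

open scoped Topology

namespace Real

theorem hasDerivAt_tanh (x : ℝ) : HasDerivAt tanh (1 / cosh x ^ 2) x := by
  have h := (hasDerivAt_sinh x).div (hasDerivAt_cosh x) (cosh_pos x).ne'
  rw [← sq, ← sq, cosh_sq_sub_sinh_sq] at h
  exact h.congr_of_eventuallyEq (.of_forall tanh_eq_sinh_div_cosh)

theorem continuous_tanh : Continuous tanh :=
  continuous_iff_continuousAt.2 fun x => (hasDerivAt_tanh x).continuousAt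

end Real

theorem arctanh_zero : arctanh 0 = 0 := by
  simp [arctanh]

theorem hasDerivAt_arctanh {x : ℝ} (h₁ : x ≠ -1) (h₂ : x ≠ 1) :
    HasDerivAt arctanh (1 / (1 - x ^ 2)) x := by
  have hp : 1 + x ≠ 0 := fun h => h₁ (by linarith)
  have hm : 1 - x ≠ 0 := sub_ne_zero.2 h₂.symm
  have h := (((hasDerivAt_id x).const_add 1).div ((hasDerivAt_id x).const_sub 1) hm).log
    (div_ne_zero hp hm) |>.const_mul (1 / 2)
  have hsq : 1 - x ^ 2 ≠ 0 := by
    rw [show 1 - x ^ 2 = (1 + x) * (1 - x) by ring]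
    exact mul_ne_zero hp hm
  refine h.congr_deriv ?_
  simp only [id, Pi.div_apply]
  field_simp
  ring

theorem HasDerivAt.tendsto_natCast_mul_sub {f : ℝ → ℝ} {f' : ℝ} (hf : HasDerivAt f f' 0) :
    Tendsto (fun K : ℕ => (K : ℝ) * (f (K : ℝ)⁻¹ - f 0)) atTop (𝓝 f') := by
  have hinv : Tendsto (fun K : ℕ => (K : ℝ)⁻¹) atTop (𝓝[≠] 0) :=
    (tendsto_inv_atTop_nhdsGT_zero.comp tendsto_natCast_atTop_atTop).mono_right
      (nhdsWithin_mono _ fun _ hx => ne_of_gt hx)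
  refine ((hasDerivAt_iff_tendsto_slope.mp hf).comp hinv).congr fun K => ?_
  simp [slope_def_field, div_inv_eq_mul, mul_comm]

theorem tendsto_natCast_mul_tanh_div (a : ℝ) :
    Tendsto (fun K : ℕ => (K : ℝ) * tanh (a / K)) atTop (𝓝 a) := by
  have h : HasDerivAt (fun s => tanh (a * s)) a 0 := by
    simpa [Function.comp_def] using
      (Real.hasDerivAt_tanh (a * 0)).comp 0 ((hasDerivAt_id 0).const_mul a)
  simpa [div_eq_mul_inv] using h.tendsto_natCast_mul_sub

@[simp]
theorem fAct_zero (t : ℝ) : fAct 0 t = tanh t :=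
  if_pos rfl

theorem continuousAt_fAct_zero (t : ℝ) : ContinuousAt (fun β => fAct β t) 0 := by
  have ha : HasDerivAt arctanh 1 (0 * tanh t) := by
    simpa using hasDerivAt_arctanh (x := 0) (by norm_num) (by norm_num)
  have h : HasDerivAt (fun β => arctanh (β * tanh t)) (tanh t) 0 := by
    simpa [Function.comp_def] using ha.comp 0 (hasDerivAt_mul_const (tanh t))
  rw [← continuousWithinAt_compl_self, ContinuousWithinAt, fAct_zero]
  refine (hasDerivAt_iff_tendsto_slope.mp h).congr' ?_
  filter_upwards [self_mem_nhdsWithin] with β (hβ : β ≠ 0)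
  simp [slope_def_field, fAct, hβ, arctanh_zero, div_eq_inv_mul]

theorem tendsto_tanh_add_sum_replicate_units {ι : Type*} [Fintype ι] (u₀ : ℝ) (u z : ι → ℝ) :
    Tendsto (fun K : ℕ => tanh (u₀ + ∑ _i ∈ range K, ∑ j, tanh (u j / K) * fAct (|u j| / K) (z j)))
      atTop (𝓝 (tanh (u₀ + ∑ j, u j * tanh (z j)))) := by
  have hsplit : ∀ K : ℕ, ∑ _i ∈ range K, ∑ j, tanh (u j / K) * fAct (|u j| / K) (z j)
      = ∑ j, (K * tanh (u j / K)) * fAct (|u j| / K) (z j) := fun K => by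
    simp only [sum_const, card_range, nsmul_eq_mul, mul_sum, mul_assoc]
  have hunit (j : ι) : Tendsto (fun K : ℕ => (K * tanh (u j / K)) * fAct (|u j| / K) (z j))
      atTop (𝓝 (u j * tanh (z j))) := by
    have hβ : Tendsto (fun K : ℕ => fAct (|u j| / K) (z j)) atTop (𝓝 (tanh (z j))) := by
      simpa only [Function.comp_def, fAct_zero] using (continuousAt_fAct_zero (z j)).tendsto.comp
        (tendsto_const_div_atTop_nhds_zero_nat |u j|)
    exact (tendsto_natCast_mul_tanh_div (u j)).mul hβ
  simp only [hsplit]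
  exact ((continuous_tanh.comp (continuous_const_add u₀)).tendsto _).comp
    (tendsto_finsetSum _ fun j _ => hunit j)

theorem tanh_network_limit_of_rbm_general {T n : ℕ}
    (u0 : ℝ) (u : Fin T → ℝ) (M : Fin T → Fin (n + 1) → ℝ) (x : Fin n → ℝ) :
    Tendsto (fun K : ℕ =>
        Real.tanh (u0 + ∑ _i ∈ Finset.range K, ∑ j : Fin T,
          Real.tanh (u j / K) *
            fAct (|u j| / K) (M j 0 + ∑ k : Fin n, M j k.succ * x k)))
      atTop
      (nhds (Real.tanh (u0 + ∑ j : Fin T,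
        u j * Real.tanh (M j 0 + ∑ k : Fin n, M j k.succ * x k)))) :=
  tendsto_tanh_add_sum_replicate_units u0 u fun j => M j 0 + ∑ k : Fin n, M j k.succ * x k

/-- **Lemma (2-layer tanh networks as limits of RBM prediction functions).**
For any 2-layer tanh network with outer bias `u₀`, outer weights `u j`, inner biases
`M j 0` and inner weights `M j (k+1)`, and any input `x ∈ ℝⁿ`, we have
`tanh (u₀ + ∑_{i=1}^K ∑_{j=1}^T tanh (u j / K) * f_{|u j|/K}(M j 0 + ∑ k M j (k+1) x k))`
converges as `K → ∞` to `tanh (u₀ + ∑ j u j * tanh (M j 0 + ∑ k M j (k+1) x k))`. -/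
theorem tanh_network_limit_of_rbm {T n : ℕ} (hT : 0 < T) (hn : 0 < n)
    (u0 : ℝ) (u : Fin T → ℝ) (M : Fin T → Fin (n + 1) → ℝ) (x : Fin n → ℝ) :
    Tendsto (fun K : ℕ =>
        Real.tanh (u0 + ∑ _i ∈ Finset.range K, ∑ j : Fin T,
          Real.tanh (u j / K) *
            fAct (|u j| / K) (M j 0 + ∑ k : Fin n, M j k.succ * x k)))
      atTop
      (nhds (Real.tanh (u0 + ∑ j : Fin T,
        u j * Real.tanh (M j 0 + ∑ k : Fin n, M j k.succ * x k)))) :=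
  tanh_network_limit_of_rbm_general u0 u M x
end

section
/- Let W be an n1 × n2 real matrix and b¹ ∈ ℝ^{n1}, b² ∈ ℝ^{n2}, and suppose that for every visible index i ∈ [n1], Σ_{j=1}^{n2} |W_{ij}| + |b¹_i| ≤ λ₁. Let P be the marginal distribution on the visible units {±1}^{n1} of the RBM with probability mass function proportional to exp(⟨x, W h⟩ + ⟨b¹, x⟩ + ⟨b², h⟩) on {±1}^{n1} × {±1}^{n2}. Then for every d ≤ n1, δ_P(d) ≥ (1 − tanh(λ₁))^d. -/
open Finset Real

/-- RBM weight `exp(⟨x, W h⟩ + ⟨b¹, x⟩ + ⟨b², h⟩)` of a joint spin configuration,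
encoded by booleans. -/
noncomputable def rbmExp {n1 n2 : ℕ} (W : Fin n1 → Fin n2 → ℝ) (b1 : Fin n1 → ℝ)
    (b2 : Fin n2 → ℝ) (x : Fin n1 → Bool) (h : Fin n2 → Bool) : ℝ :=
  Real.exp ((∑ i, ∑ j, spin (x i) * W i j * spin (h j)) +
    (∑ i, b1 i * spin (x i)) + (∑ j, b2 j * spin (h j)))

/-- Marginal distribution of the visible units of the RBM. -/
noncomputable def rbmVisible {n1 n2 : ℕ} (W : Fin n1 → Fin n2 → ℝ) (b1 : Fin n1 → ℝ)
    (b2 : Fin n2 → ℝ) (x : Fin n1 → Bool) : ℝ :=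
  (∑ h : Fin n2 → Bool, rbmExp W b1 b2 x h) /
    ∑ y : Fin n1 → Bool, ∑ h : Fin n2 → Bool, rbmExp W b1 b2 y h

/-!
Given the hidden layer, flipping the visible spin `x i` multiplies the RBM weight by
`exp (-2 x_i u)`, where `u = ∑ j, W i j h j + b¹ i` satisfies `|u| ≤ λ₁`. Hence each visible
spin takes either value with conditional probability at least `(1 - tanh λ₁) / 2` given
everything else, and fixing the spins of `S` one at a time gives
`Pr (X_S = a_S) ≥ ((1 - tanh λ₁) / 2) ^ |S|`; multiply by `2 ^ |S|` and use `|S| ≤ d`.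
-/

namespace Real

theorem one_sub_tanh_eq (L : ℝ) : 1 - tanh L = 2 / (exp (2 * L) + 1) := by
  have hL : exp (2 * L) = exp L * exp L := by rw [← exp_add]; ring_nf
  have hinv : exp (-L) * exp L = 1 := by rw [← exp_add]; simp
  rw [tanh_eq, hL]
  field_simp
  linear_combination (2 * exp L) * hinv

theorem tanh_nonneg {L : ℝ} (hL : 0 ≤ L) : 0 ≤ tanh L := by
  rw [tanh_eq_sinh_div_cosh]
  exact div_nonneg (sinh_nonneg_iff.mpr hL) (cosh_pos L).le

theorem one_sub_tanh_mul_one_add_exp_le {v L : ℝ} (hv : v ≤ L) :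
    (1 - tanh L) * (1 + exp (2 * v)) ≤ 2 := by
  rw [one_sub_tanh_eq, div_mul_eq_mul_div, div_le_iff₀ (by positivity)]
  nlinarith [exp_le_exp.mpr (by linarith : 2 * v ≤ 2 * L)]

end Real

lemma spin_not (b : Bool) : spin (!b) = -spin b := by cases b <;> simp [spin]

lemma abs_spin (b : Bool) : |spin b| = 1 := by cases b <;> simp [spin]

section Flip

variable {ι : Type*} [DecidableEq ι]

def flipAt (i : ι) (x : ι → Bool) : ι → Bool := Function.update x i (!x i)

@[simp] lemma flipAt_self (i : ι) (x : ι → Bool) : flipAt i x i = !x i := by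
  simp [flipAt]

lemma flipAt_of_ne {i k : ι} (h : k ≠ i) (x : ι → Bool) : flipAt i x k = x k :=
  Function.update_of_ne h _ _

@[simp] lemma flipAt_flipAt (i : ι) (x : ι → Bool) : flipAt i (flipAt i x) = x := by
  funext k
  rcases eq_or_ne k i with rfl | hk
  · simp
  · simp [flipAt_of_ne hk]

variable [Fintype ι]

lemma sum_spin_flipAt_mul (i : ι) (x : ι → Bool) (g : ι → ℝ) :
    ∑ k, spin (flipAt i x k) * g k = ∑ k, spin (x k) * g k - 2 * (spin (x i) * g i) := by
  rw [← Finset.add_sum_erase _ _ (mem_univ i), ← Finset.add_sum_erase _ _ (mem_univ i),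
    Finset.sum_congr rfl fun k hk => by rw [flipAt_of_ne (Finset.ne_of_mem_erase hk)],
    flipAt_self, spin_not]
  ring

def agreeOn (S : Finset ι) (a : ι → Bool) : Finset (ι → Bool) :=
  univ.filter fun x => ∀ i ∈ S, x i = a i

lemma sum_agreeOn_eq_sum_agreeOn_insert {i : ι} {S : Finset ι} (hi : i ∉ S) (a : ι → Bool)
    (F : (ι → Bool) → ℝ) :
    ∑ x ∈ agreeOn S a, F x = ∑ x ∈ agreeOn (insert i S) a, (F x + F (flipAt i x)) := by
  have hflip : ∀ x, x ∈ (agreeOn S a).filter (fun x => ¬x i = a i) ↔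
      flipAt i x ∈ agreeOn (insert i S) a := by
    intro x
    simp only [agreeOn, mem_filter, mem_univ, true_and, forall_mem_insert, flipAt_self]
    have hS : ∀ k ∈ S, flipAt i x k = x k := fun k hk => flipAt_of_ne (by grind) x
    have hxi : ¬x i = a i ↔ (!x i) = a i := by cases x i <;> cases a i <;> decide
    grind
  rw [sum_add_distrib, ← sum_filter_add_sum_filter_not _ (fun x => x i = a i)]
  congr 1
  · congr 1
    ext x
    simp only [agreeOn, mem_filter, mem_univ, true_and, forall_mem_insert]
    tauto
  · refine sum_nbij' (flipAt i) (flipAt i) (fun x hx => (hflip x).mp hx)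
      (fun x hx => (hflip _).mpr (by simpa using hx)) (by simp) (by simp) (by simp)

/-- `hF` says that, under `F`, each spin takes its value with conditional probability at least
`c` given the others; fixing the spins on `S` one at a time then keeps a `c ^ |S|` fraction. -/
theorem pow_card_mul_sum_le_sum_agreeOn {F : (ι → Bool) → ℝ} {c : ℝ} (hc : 0 ≤ c)
    (hF : ∀ x i, c * (F x + F (flipAt i x)) ≤ F x) (a : ι → Bool) (S : Finset ι) :
    c ^ S.card * ∑ x, F x ≤ ∑ x ∈ agreeOn S a, F x := by
  induction S using Finset.induction_on with
  | empty => simp [agreeOn]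
  | insert i S hi ih =>
    calc c ^ (insert i S).card * ∑ x, F x
        = c * (c ^ S.card * ∑ x, F x) := by rw [card_insert_of_notMem hi, pow_succ]; ring
      _ ≤ c * ∑ x ∈ agreeOn S a, F x := mul_le_mul_of_nonneg_left ih hc
      _ = ∑ x ∈ agreeOn (insert i S) a, c * (F x + F (flipAt i x)) := by
        rw [sum_agreeOn_eq_sum_agreeOn_insert hi, mul_sum]
      _ ≤ ∑ x ∈ agreeOn (insert i S) a, F x := sum_le_sum fun x _ => hF x i

end Flip

section RBM

variable {n1 n2 : ℕ} (W : Fin n1 → Fin n2 → ℝ) (b1 : Fin n1 → ℝ) (b2 : Fin n2 → ℝ)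

/-- The argument of `tanh` in `E[X_i | H = h] = tanh (localField W b1 h i)`. -/
def localField (h : Fin n2 → Bool) (i : Fin n1) : ℝ := ∑ j, W i j * spin (h j) + b1 i

lemma abs_localField_le (h : Fin n2 → Bool) (i : Fin n1) :
    |localField W b1 h i| ≤ ∑ j, |W i j| + |b1 i| := by
  refine (abs_add_le _ _).trans (add_le_add_left ((abs_sum_le_sum_abs _ _).trans_eq ?_) _)
  simp [abs_mul, abs_spin]

lemma rbmExp_eq_exp_localField (x : Fin n1 → Bool) (h : Fin n2 → Bool) :
    rbmExp W b1 b2 x h =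
      exp (∑ i, spin (x i) * localField W b1 h i + ∑ j, b2 j * spin (h j)) := by
  simp only [rbmExp, localField, mul_add, mul_sum, sum_add_distrib, mul_assoc, mul_comm (b1 _)]

lemma rbmExp_flipAt (x : Fin n1 → Bool) (h : Fin n2 → Bool) (i : Fin n1) :
    rbmExp W b1 b2 (flipAt i x) h =
      exp (2 * -(spin (x i) * localField W b1 h i)) * rbmExp W b1 b2 x h := by
  rw [rbmExp_eq_exp_localField, rbmExp_eq_exp_localField, ← exp_add, sum_spin_flipAt_mul]
  ring_nf

variable {W b1} {lam1 : ℝ}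

lemma mul_rbmExp_add_rbmExp_flipAt_le (hlam : ∀ i, ∑ j, |W i j| + |b1 i| ≤ lam1)
    (x : Fin n1 → Bool) (h : Fin n2 → Bool) (i : Fin n1) :
    (1 - tanh lam1) / 2 * (rbmExp W b1 b2 x h + rbmExp W b1 b2 (flipAt i x) h) ≤
      rbmExp W b1 b2 x h := by
  have hv : -(spin (x i) * localField W b1 h i) ≤ lam1 := by
    refine (neg_le_abs _).trans ?_
    rw [abs_mul, abs_spin, one_mul]
    exact (abs_localField_le W b1 h i).trans (hlam i)
  have hA : 0 < rbmExp W b1 b2 x h := exp_pos _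
  rw [rbmExp_flipAt]
  nlinarith [one_sub_tanh_mul_one_add_exp_le hv]

theorem pow_card_le_sum_agreeOn_rbmVisible (hlam : ∀ i, ∑ j, |W i j| + |b1 i| ≤ lam1)
    (S : Finset (Fin n1)) (a : Fin n1 → Bool) :
    ((1 - tanh lam1) / 2) ^ S.card ≤ ∑ x ∈ agreeOn S a, rbmVisible W b1 b2 x := by
  have hZ : 0 < ∑ y : Fin n1 → Bool, ∑ h : Fin n2 → Bool, rbmExp W b1 b2 y h :=
    sum_pos (fun y _ => sum_pos (fun h _ => exp_pos _) univ_nonempty) univ_nonempty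
  have hc : 0 ≤ (1 - tanh lam1) / 2 := by linarith [tanh_lt_one lam1]
  simp only [rbmVisible]
  rw [← sum_div, le_div_iff₀ hZ]
  refine pow_card_mul_sum_le_sum_agreeOn hc (fun x i => ?_) a S
  rw [← sum_add_distrib, mul_sum]
  exact sum_le_sum fun h _ => mul_rbmExp_add_rbmExp_flipAt_le b2 hlam x h i

end RBM

theorem rbm_delta_lower_bound_general {n1 n2 : ℕ}
    (W : Fin n1 → Fin n2 → ℝ) (b1 : Fin n1 → ℝ) (b2 : Fin n2 → ℝ) (lam1 : ℝ)
    (hlam : ∀ i, (∑ j, |W i j|) + |b1 i| ≤ lam1)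
    (d : ℕ) (hd : d ≤ n1)
    (S : Finset (Fin n1)) (hS : S.card ≤ d) (a : Fin n1 → Bool) :
    (1 - Real.tanh lam1) ^ d ≤
      2 ^ S.card *
        ∑ x ∈ Finset.univ.filter (fun x : Fin n1 → Bool => ∀ i ∈ S, x i = a i),
          rbmVisible W b1 b2 x := by
  have hmono : (1 - tanh lam1) ^ d ≤ (1 - tanh lam1) ^ S.card := by
    rcases hS.eq_or_lt with hSd | hSd
    · rw [hSd]
    -- `λ₁ ≥ 0` as soon as there is a visible unit, which `|S| < d ≤ n1` provides
    have hlam0 : 0 ≤ lam1 := (by positivity : (0 : ℝ) ≤ _).trans (hlam ⟨0, by omega⟩)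
    exact pow_le_pow_of_le_one (by linarith [tanh_lt_one lam1])
      (by linarith [tanh_nonneg hlam0]) hS
  calc (1 - tanh lam1) ^ d ≤ 2 ^ S.card * ((1 - tanh lam1) / 2) ^ S.card := by
        rwa [← mul_pow, mul_div_cancel₀ _ two_ne_zero]
    _ ≤ 2 ^ S.card * ∑ x ∈ agreeOn S a, rbmVisible W b1 b2 x :=
        mul_le_mul_of_nonneg_left (pow_card_le_sum_agreeOn_rbmVisible b2 hlam S a) (by positivity)
    -- `agreeOn` decides `∀ i ∈ S` via `Fintype`, the statement via `Nat.decidableForallFin`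
    _ = _ := by unfold agreeOn; congr

/-- **Lemma (unpredictability of spins in an `ℓ¹`-bounded RBM).**
If `∑_j |W i j| + |b¹ i| ≤ λ₁` for every visible unit `i`, then the visible marginal `P`
of the RBM satisfies `δ_P(d) ≥ (1 − tanh λ₁)^d`, i.e. for every set `S` of at most `d`
visible units and every assignment `a`,
`2^{|S|} · Pr_P(X_S = a_S) ≥ (1 − tanh λ₁)^d`. -/
theorem rbm_delta_lower_bound {n1 n2 : ℕ} (hn1 : 0 < n1) (hn2 : 0 < n2)
    (W : Fin n1 → Fin n2 → ℝ) (b1 : Fin n1 → ℝ) (b2 : Fin n2 → ℝ) (lam1 : ℝ)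
    (hlam : ∀ i, (∑ j, |W i j|) + |b1 i| ≤ lam1)
    (d : ℕ) (hd : d ≤ n1)
    (S : Finset (Fin n1)) (hS : S.card ≤ d) (a : Fin n1 → Bool) :
    (1 - Real.tanh lam1) ^ d ≤
      2 ^ S.card *
        ∑ x ∈ Finset.univ.filter (fun x : Fin n1 → Bool => ∀ i ∈ S, x i = a i),
          rbmVisible W b1 b2 x :=
  rbm_delta_lower_bound_general W b1 b2 lam1 hlam d hd S hS a
end

section
/- For every β ∈ [0,1] and every complex number z = x + iy with |y| ≤ π/4: cosh(z) ≠ 0, the quantity 1 − β² tanh²(z) is nonzero, and | (1 − tanh²(z)) / (1 − β² tanh²(z)) | ≤ 2. -/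
/-!
Clearing `cosh² z` gives `(1 - tanh² z) / (1 - β² tanh² z) = 1 / w` with
`w = 1 + (1 - β²) sinh² z = 1 + (1 - β²) (cosh 2z - 1) / 2`. For `|Im z| ≤ π/4`,
`Re cosh 2z = cosh 2x · cos 2y ≥ 0`, so `Re w ≥ 1/2` and hence `‖1 / w‖ ≤ 2`.
-/

open Complex Real

namespace Complex

theorem cosh_re (z : ℂ) : (cosh z).re = Real.cosh z.re * Real.cos z.im := by
  conv_lhs => rw [← re_add_im z]
  rw [cosh_add, cosh_mul_I, sinh_mul_I, ← ofReal_cosh, ← ofReal_sinh, ← ofReal_cos, ← ofReal_sin]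
  simp [cos_ofReal_re]

theorem cosh_re_nonneg_of_abs_im_le {z : ℂ} (hz : |z.im| ≤ π / 2) : 0 ≤ (cosh z).re := by
  rw [cosh_re]
  have := abs_le.1 hz
  exact mul_nonneg (Real.cosh_pos _).le (Real.cos_nonneg_of_mem_Icc ⟨by linarith, by linarith⟩)

theorem half_le_re_one_add_mul_sinh_sq {t : ℝ} (ht0 : 0 ≤ t) (ht1 : t ≤ 1) {z : ℂ}
    (hz : |z.im| ≤ π / 4) : 1 / 2 ≤ (1 + t * sinh z ^ 2).re := by
  have h2z : |(2 * z).im| ≤ π / 2 := by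
    simp only [mul_im, re_ofNat, im_ofNat, zero_mul, add_zero, abs_mul, abs_two]
    linarith
  have hsinh : sinh z ^ 2 = (cosh (2 * z) - 1) / 2 := by
    rw [cosh_two_mul, cosh_sq]; ring
  have := cosh_re_nonneg_of_abs_im_le h2z
  rw [hsinh]
  simp only [add_re, one_re, re_ofReal_mul, div_ofNat_re, sub_re]
  nlinarith

theorem one_sub_mul_tanh_sq {z : ℂ} (hz : cosh z ≠ 0) (c : ℂ) :
    1 - c * tanh z ^ 2 = (1 + (1 - c) * sinh z ^ 2) / cosh z ^ 2 := by
  rw [tanh_eq_sinh_div_cosh]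
  field_simp
  linear_combination cosh_sq z

end Complex

/-- **Lemma (uniform derivative bound for the activations).** For every `β ∈ [0,1]`
and every complex `z = x + iy` with `|y| ≤ π/4`: `cosh z ≠ 0`,
`1 − β² tanh² z ≠ 0`, and `|(1 − tanh² z)/(1 − β² tanh² z)| ≤ 2`. -/
theorem fbeta_deriv_bound (β : ℝ) (hβ0 : 0 ≤ β) (hβ1 : β ≤ 1)
    (z : ℂ) (hz : |z.im| ≤ Real.pi / 4) :
    Complex.cosh z ≠ 0 ∧
    (1 - (β : ℂ) ^ 2 * Complex.tanh z ^ 2) ≠ 0 ∧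
    ‖(1 - Complex.tanh z ^ 2) / (1 - (β : ℂ) ^ 2 * Complex.tanh z ^ 2)‖ ≤ 2 := by
  set w := 1 + ((1 - β ^ 2 : ℝ) : ℂ) * sinh z ^ 2
  have hw : 1 / 2 ≤ w.re :=
    half_le_re_one_add_mul_sinh_sq (by nlinarith) (by nlinarith) hz
  have hw0 : w ≠ 0 := fun h => by norm_num [h] at hw
  have hcosh : cosh z ≠ 0 := by
    -- `cosh² z = 1 + sinh² z` is the case `β = 0`
    have h := half_le_re_one_add_mul_sinh_sq zero_le_one le_rfl hz
    rw [ofReal_one, one_mul, add_comm, ← Complex.cosh_sq] at h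
    exact pow_ne_zero_iff two_ne_zero |>.1 fun h0 => by norm_num [h0] at h
  have hden : 1 - (β : ℂ) ^ 2 * tanh z ^ 2 = w / cosh z ^ 2 := by
    rw [one_sub_mul_tanh_sq hcosh]; simp only [w, ofReal_sub, ofReal_one, ofReal_pow]
  have hnum : 1 - tanh z ^ 2 = 1 / cosh z ^ 2 := by
    simpa using one_sub_mul_tanh_sq hcosh 1
  refine ⟨hcosh, hden ▸ div_ne_zero hw0 (pow_ne_zero 2 hcosh), ?_⟩
  rw [hnum, hden, div_div_div_cancel_right₀ (pow_ne_zero 2 hcosh), norm_div, norm_one,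
    div_le_iff₀ (norm_pos_iff.2 hw0)]
  linarith [re_le_norm w]
end

section
/- Let n, m be positive integers, γ ∈ (0,1], r ≥ 0, and let P be a probability distribution on {±1}ⁿ with P(x) ≥ γ/2ⁿ for every x. Let X₁, …, X_m be i.i.d. samples from P and σ₁, …, σ_m i.i.d. uniform {±1}-valued (Rademacher) random variables, independent of the X_i. Then E[ sup { (1/m) Σ_{i=1}^{m} σ_i g(X_i) : g : {±1}ⁿ → ℝ with E_{X∼P}[g(X)²] ≤ r/4 } ] ≤ 2^{n/2} √r / (2 √(γ m)). -/
/-!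
Write the sample average as `∑ₓ a(x) g(x)`, where `a(x) = (1/m) ∑_{i : Xᵢ = x} σᵢ`. By
Cauchy–Schwarz in `L²(P)` the supremum over the ball `E_P[g²] ≤ r/4` is at most
`(√r / 2) · √(∑ₓ a(x)² / P(x))`. Jensen moves the expectation inside the square root, and the
Rademacher signs are orthogonal, so `E[a(x)²] = E[#{i : Xᵢ = x}] / m² = P(x) / m`. Hence the
expected supremum is at most `(√r / 2) · √(2ⁿ / m)`, which is at most the claimed bound since
`γ ≤ 1`.
-/

open Finset Real

lemma spin_mul_self (b : Bool) : spin b * spin b = 1 := by cases b <;> simp [spin]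

section Rademacher

variable {ι : Type*} [Fintype ι] [DecidableEq ι]

lemma sum_spin_mul_spin (i j : ι) :
    ∑ σ : ι → Bool, spin (σ i) * spin (σ j) = if i = j then 2 ^ Fintype.card ι else 0 := by
  split_ifs with h
  · simp [h, spin_mul_self]
  -- flipping the sign at `i` is a sign-reversing involution
  refine sum_involution (fun σ _ => Function.update σ i (!σ i)) (fun σ _ => ?_)
    (fun σ _ _ hσ => ?_) (fun _ _ => mem_univ _) (fun σ _ => ?_)
  · rw [Function.update_self, Function.update_of_ne (Ne.symm h), spin_not]
    ring
  · simpa using congrFun hσ i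
  · simp

lemma sum_sq_sum_spin_mul (c : ι → ℝ) :
    ∑ σ : ι → Bool, (∑ i, spin (σ i) * c i) ^ 2 = 2 ^ Fintype.card ι * ∑ i, c i ^ 2 :=
  calc ∑ σ : ι → Bool, (∑ i, spin (σ i) * c i) ^ 2
      = ∑ i, ∑ j, c i * c j * ∑ σ : ι → Bool, spin (σ i) * spin (σ j) := by
        simp_rw [sq, sum_mul_sum, mul_sum]
        rw [sum_comm]
        refine sum_congr rfl fun i _ => ?_
        rw [sum_comm]
        exact sum_congr rfl fun j _ => sum_congr rfl fun σ _ => by ring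
    _ = 2 ^ Fintype.card ι * ∑ i, c i ^ 2 := by
        simp [sum_spin_mul_spin, mul_sum, sq, mul_comm]

end Rademacher

lemma sum_mul_sqrt_le_sqrt_sum_mul {β : Type*} [Fintype β] {w Z : β → ℝ} (hw : ∀ b, 0 ≤ w b)
    (hw1 : ∑ b, w b = 1) (hZ : ∀ b, 0 ≤ Z b) : ∑ b, w b * √(Z b) ≤ √(∑ b, w b * Z b) :=
  Real.strictConcaveOn_sqrt.concaveOn.le_map_sum (fun b _ => hw b) hw1 (fun b _ => hZ b)

section ProductWeights

variable {α ι : Type*} [Fintype α] [Fintype ι] [DecidableEq ι] {P : α → ℝ}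

lemma sum_prod_apply_eq_one (hP : ∑ x, P x = 1) : ∑ X : ι → α, ∏ i, P (X i) = 1 := by
  rw [← Fintype.prod_sum (fun _ => P), hP, prod_const_one]

lemma sum_prod_mul_apply (hP : ∑ x, P x = 1) (i : ι) (f : α → ℝ) :
    ∑ X : ι → α, (∏ j, P (X j)) * f (X i) = ∑ x, P x * f x := by
  have hsplit : ∀ X : ι → α,
      (∏ j, P (X j)) * f (X i) = ∏ j, P (X j) * (if j = i then f (X j) else 1) := fun X => by
    rw [prod_mul_distrib, prod_ite_eq']
    simp
  simp_rw [hsplit, ← Fintype.prod_sum (fun j x => P x * (if j = i then f x else 1))]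
  simp [mul_ite, hP]

lemma sum_sum_prod_mul_sqrt_le (hP : ∑ x, P x = 1) (hP0 : ∀ x, 0 ≤ P x)
    {Z : (ι → α) → (ι → Bool) → ℝ} (hZ : ∀ X σ, 0 ≤ Z X σ) :
    ∑ X : ι → α, ∑ σ : ι → Bool, (∏ i, P (X i)) * (1 / 2 ^ Fintype.card ι) * √(Z X σ) ≤
      √(∑ X : ι → α, ∑ σ : ι → Bool, (∏ i, P (X i)) * (1 / 2 ^ Fintype.card ι) * Z X σ) := by
  simp only [← Fintype.sum_prod_type']
  refine sum_mul_sqrt_le_sqrt_sum_mul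
    (fun _ => mul_nonneg (prod_nonneg fun _ _ => hP0 _) (by positivity)) ?_ (fun p => hZ p.1 p.2)
  simp [Fintype.sum_prod_type, ← sum_mul, ← mul_sum, sum_prod_apply_eq_one hP]

end ProductWeights

section WeightedL2

variable {α : Type*} [Fintype α] {P : α → ℝ}

lemma sum_mul_le_sqrt_sum_sq_div_mul_sqrt (hP : ∀ x, 0 < P x) (a g : α → ℝ) :
    ∑ x, a x * g x ≤ √(∑ x, a x ^ 2 / P x) * √(∑ x, P x * g x ^ 2) := by
  have hsqrt : ∀ x, √(P x) ≠ 0 := fun x => (sqrt_pos.2 (hP x)).ne'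
  calc ∑ x, a x * g x = ∑ x, a x / √(P x) * (√(P x) * g x) :=
        sum_congr rfl fun x _ => by field_simp [hsqrt x]
    _ ≤ _ := Real.sum_mul_le_sqrt_mul_sqrt univ _ _
    _ = _ := by simp_rw [div_pow, mul_pow, sq_sqrt (hP _).le]

lemma sSup_sum_mul_le (hP : ∀ x, 0 < P x) (a : α → ℝ) (s : ℝ) :
    sSup {t | ∃ g : α → ℝ, ∑ x, P x * g x ^ 2 ≤ s ∧ t = ∑ x, a x * g x} ≤
      √(∑ x, a x ^ 2 / P x) * √s := by
  refine Real.sSup_le ?_ (by positivity)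
  rintro _ ⟨g, hg, rfl⟩
  exact (sum_mul_le_sqrt_sum_sq_div_mul_sqrt hP a g).trans (by gcongr)

end WeightedL2

section SignedCount

variable {α ι : Type*} [DecidableEq α] [Fintype ι]

def signedCount (X : ι → α) (σ : ι → Bool) (x : α) : ℝ :=
  ∑ i, spin (σ i) * if X i = x then 1 else 0

lemma sum_spin_mul_apply_eq_sum_signedCount_mul [Fintype α] (X : ι → α) (σ : ι → Bool)
    (g : α → ℝ) :
    ∑ i, spin (σ i) * g (X i) = ∑ x, signedCount X σ x * g x := by
  simp only [signedCount, sum_mul, mul_assoc, ite_mul, one_mul, zero_mul]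
  rw [sum_comm]
  simp

lemma sum_signedCount_sq [DecidableEq ι] (X : ι → α) (x : α) :
    ∑ σ : ι → Bool, signedCount X σ x ^ 2 =
      2 ^ Fintype.card ι * ∑ i, if X i = x then 1 else 0 := by
  simp only [signedCount, sum_sq_sum_spin_mul]
  congr! 2 with i
  split_ifs <;> simp

lemma sum_prod_mul_count [Fintype α] [DecidableEq ι] {P : α → ℝ} (hP : ∑ x, P x = 1) (x : α) :
    ∑ X : ι → α, (∏ j, P (X j)) * ∑ i, (if X i = x then 1 else 0) = Fintype.card ι * P x := by
  simp_rw [mul_sum]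
  rw [sum_comm]
  calc _ = ∑ _i : ι, P x := sum_congr rfl fun i _ => by
        simpa using sum_prod_mul_apply hP i (fun y => if y = x then (1 : ℝ) else 0)
    _ = _ := by simp

lemma expectation_sum_signedCount_sq_div [Fintype α] [DecidableEq ι] {P : α → ℝ}
    (hP : ∑ x, P x = 1) (hP0 : ∀ x, P x ≠ 0) :
    ∑ X : ι → α, ∑ σ : ι → Bool, (∏ i, P (X i)) * (1 / 2 ^ Fintype.card ι) *
      ∑ x, signedCount X σ x ^ 2 / P x = Fintype.card ι * Fintype.card α := by
  have hσ : ∀ (X : ι → α) (x : α), ∑ σ : ι → Bool, (∏ i, P (X i)) * (1 / 2 ^ Fintype.card ι) *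
      (signedCount X σ x ^ 2 / P x) = (∏ i, P (X i)) * (∑ i, if X i = x then 1 else 0) / P x := by
    intro X x
    rw [← mul_sum, ← sum_div, sum_signedCount_sq]
    field_simp
  calc _ = ∑ X : ι → α, ∑ x, ∑ σ : ι → Bool, (∏ i, P (X i)) * (1 / 2 ^ Fintype.card ι) *
        (signedCount X σ x ^ 2 / P x) := by
        simp_rw [mul_sum]
        exact sum_congr rfl fun X _ => sum_comm
    _ = ∑ x, (∑ X : ι → α, (∏ i, P (X i)) * ∑ i, if X i = x then 1 else 0) / P x := by
        simp_rw [hσ, sum_div]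
        exact sum_comm
    _ = Fintype.card ι * Fintype.card α := by
        simp_rw [sum_prod_mul_count hP, mul_div_cancel_right₀ _ (hP0 _)]
        simp [mul_comm]

lemma expectation_sum_normalized_signedCount_sq_div [Fintype α] [DecidableEq ι] {P : α → ℝ}
    (hP : ∑ x, P x = 1) (hP0 : ∀ x, P x ≠ 0) :
    ∑ X : ι → α, ∑ σ : ι → Bool, (∏ i, P (X i)) * (1 / 2 ^ Fintype.card ι) *
      ∑ x, (1 / Fintype.card ι * signedCount X σ x) ^ 2 / P x =
        Fintype.card α / Fintype.card ι := by
  set c : ℝ := 1 / Fintype.card ι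
  calc _ = c ^ 2 * ∑ X : ι → α, ∑ σ : ι → Bool, (∏ i, P (X i)) * (1 / 2 ^ Fintype.card ι) *
        ∑ x, signedCount X σ x ^ 2 / P x := by
        rw [mul_sum]
        refine sum_congr rfl fun X _ => ?_
        rw [mul_sum]
        refine sum_congr rfl fun σ _ => ?_
        simp_rw [mul_pow, mul_div_assoc, ← mul_sum]
        ring
    _ = Fintype.card α / Fintype.card ι := by
      rw [expectation_sum_signedCount_sq_div hP hP0]
      rcases eq_or_ne (Fintype.card ι : ℝ) 0 with h | h
      · simp [c, h]
      · simp only [c]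
        field_simp

end SignedCount

theorem local_rademacher_bound_general {n m : ℕ}
    (γ r : ℝ) (hγ0 : 0 < γ) (hγ1 : γ ≤ 1)
    (P : (Fin n → Bool) → ℝ) (hsum : ∑ x : Fin n → Bool, P x = 1)
    (hlb : ∀ x, γ / 2 ^ n ≤ P x) :
    (∑ X : Fin m → (Fin n → Bool), ∑ σ : Fin m → Bool,
        ((∏ i, P (X i)) * (1 / 2 ^ m)) *
          sSup {t : ℝ | ∃ g : (Fin n → Bool) → ℝ,
            (∑ x : Fin n → Bool, P x * g x ^ 2) ≤ r / 4 ∧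
            t = (1 / m) * ∑ i, spin (σ i) * g (X i)}) ≤
      (2 : ℝ) ^ ((n : ℝ) / 2) * Real.sqrt r / (2 * Real.sqrt (γ * m)) := by
  have hP : ∀ x, 0 < P x := fun x => (by positivity : 0 < γ / 2 ^ n).trans_le (hlb x)
  set Z : (Fin m → Fin n → Bool) → (Fin m → Bool) → ℝ :=
    fun X σ => ∑ x, (1 / m * signedCount X σ x) ^ 2 / P x
  have hEZ : ∑ X : Fin m → Fin n → Bool, ∑ σ : Fin m → Bool,
      (∏ i, P (X i)) * (1 / 2 ^ m) * Z X σ = 2 ^ n / m := by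
    simpa [Z] using
      expectation_sum_normalized_signedCount_sq_div (ι := Fin m) hsum (fun x => (hP x).ne')
  calc _ ≤ ∑ X : Fin m → Fin n → Bool, ∑ σ : Fin m → Bool,
        (∏ i, P (X i)) * (1 / 2 ^ m) * (√(Z X σ) * √(r / 4)) := by
        gcongr with X _ σ _
        · exact mul_nonneg (prod_nonneg fun i _ => (hP _).le) (by positivity)
        · simpa only [sum_spin_mul_apply_eq_sum_signedCount_mul, mul_sum, mul_assoc] using
            sSup_sum_mul_le hP (fun x => 1 / m * signedCount X σ x) (r / 4)
    _ = (∑ X : Fin m → Fin n → Bool, ∑ σ : Fin m → Bool,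
        (∏ i, P (X i)) * (1 / 2 ^ m) * √(Z X σ)) * √(r / 4) := by
        simp_rw [sum_mul, mul_assoc]
    _ ≤ √(2 ^ n / m) * √(r / 4) := by
        gcongr
        simpa [← hEZ] using sum_sum_prod_mul_sqrt_le hsum (fun x => (hP x).le) (Z := Z)
          (fun X σ => sum_nonneg fun x _ => div_nonneg (sq_nonneg _) (hP x).le)
    _ = √(2 ^ n) * √r / (2 * √m) := by
        rw [sqrt_div' _ (Nat.cast_nonneg m), sqrt_div' r zero_le_four,
          show (4 : ℝ) = 2 ^ 2 by norm_num, sqrt_sq zero_le_two]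
        ring
    _ ≤ √(2 ^ n) * √r / (2 * √m) / √γ :=
        le_div_self (by positivity) (sqrt_pos.2 hγ0) (sqrt_le_one.2 hγ1)
    _ = _ := by
        rw [sqrt_eq_rpow (2 ^ n), ← rpow_natCast, ← rpow_mul zero_le_two, sqrt_mul hγ0.le]
        ring_nf

/-- **Lemma (local Rademacher complexity bound on the hypercube).** Let `P` be a
distribution on `{±1}ⁿ` with `P(x) ≥ γ/2ⁿ` for all `x`. Drawing `X₁,…,X_m` i.i.d. from
`P` and independent Rademacher signs `σ₁,…,σ_m`, the expected supremum of the
Rademacher average `(1/m)∑ σᵢ g(Xᵢ)` over all `g` with `E_P[g²] ≤ r/4` is at most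
`2^{n/2} √r / (2 √(γ m))`. -/
theorem local_rademacher_bound {n m : ℕ} (hn : 0 < n) (hm : 0 < m)
    (γ r : ℝ) (hγ0 : 0 < γ) (hγ1 : γ ≤ 1) (hr : 0 ≤ r)
    (P : (Fin n → Bool) → ℝ) (hsum : ∑ x : Fin n → Bool, P x = 1)
    (hlb : ∀ x, γ / 2 ^ n ≤ P x) :
    (∑ X : Fin m → (Fin n → Bool), ∑ σ : Fin m → Bool,
        ((∏ i, P (X i)) * (1 / 2 ^ m)) *
          sSup {t : ℝ | ∃ g : (Fin n → Bool) → ℝ,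
            (∑ x : Fin n → Bool, P x * g x ^ 2) ≤ r / 4 ∧
            t = (1 / m) * ∑ i, spin (σ i) * g (X i)}) ≤
      (2 : ℝ) ^ ((n : ℝ) / 2) * Real.sqrt r / (2 * Real.sqrt (γ * m)) :=
  local_rademacher_bound_general γ r hγ0 hγ1 P hsum hlb
end
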